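/- Let P' be a nonempty finite set of integers ≥ 2 with gcd 1, and let F = (max P' - 1) * (min P' - 1). Let P be a nonempty finite set of positive naturals and c₀ ∈ ℕ. Then c₀ + ⟨P⟩ ⊆ ⟨P'⟩ if and only if every element x ∈ c₀ + ⟨P⟩ with x < F belongs to ⟨P'⟩. -/
import Mathlib

open Finset

/-- Residues (mod a) reachable as sums of at most k generators from P'. -/
def reachSet (P' : Finset ℕ) (a : ℕ) : ℕ → Finset (ZMod a)
  | 0 => {0}
  | k+1 => reachSet P' a k ∪ P'.biUnion (fun p => (reachSet P' a k).image (· + (p : ZMod a)))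

lemma reachSet_mono (P' : Finset ℕ) (a k : ℕ) : reachSet P' a k ⊆ reachSet P' a (k+1) :=
  Finset.subset_union_left

lemma zero_mem_reachSet (P' : Finset ℕ) (a : ℕ) : ∀ k, (0 : ZMod a) ∈ reachSet P' a k
  | 0 => by simp [reachSet]
  | k+1 => reachSet_mono P' a k (zero_mem_reachSet P' a k)

lemma reachSet_bound {P' : Finset ℕ} {a m : ℕ} (hm : ∀ p ∈ P', p ≤ m) :
    ∀ k, ∀ r ∈ reachSet P' a k,
      ∃ t, t ∈ AddSubmonoid.closure (P' : Set ℕ) ∧ t ≤ k * m ∧ (t : ZMod a) = r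
  | 0, r, hr => by
    simp only [reachSet, Finset.mem_singleton] at hr
    exact ⟨0, zero_mem _, by simp, by simp [hr]⟩
  | k+1, r, hr => by
    simp only [reachSet, Finset.mem_union, Finset.mem_biUnion, Finset.mem_image] at hr
    rcases hr with hr | ⟨p, hp, x, hx, rfl⟩
    · obtain ⟨t, h1, h2, h3⟩ := reachSet_bound hm k _ hr
      exact ⟨t, h1, h2.trans (Nat.mul_le_mul_right m (Nat.le_succ k)), h3⟩
    · obtain ⟨t, h1, h2, h3⟩ := reachSet_bound hm k _ hx
      refine ⟨t + p, add_mem h1 (AddSubmonoid.subset_closure (by simpa using hp)), ?_, ?_⟩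
      · have := hm p hp
        have : (k+1) * m = k * m + m := by ring
        omega
      · push_cast [h3]
        rfl

/-- A finite set of residues closed under adding all generators (gcd 1) is everything. -/
lemma closed_eq_univ {a : ℕ} [NeZero a] {P' : Finset ℕ} (hgcd : P'.gcd id = 1)
    (C : Finset (ZMod a)) (h0 : (0 : ZMod a) ∈ C)
    (hcl : ∀ p ∈ P', ∀ x ∈ C, x + (p : ZMod a) ∈ C) : C = Finset.univ := by
  have hinj : ∀ z : ZMod a, Function.Injective (· + z) := fun z x y h => by
    simpa using add_right_cancel h
  have himg : ∀ p ∈ P', C.image (· + (p : ZMod a)) = C := by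
    intro p hp
    apply Finset.eq_of_subset_of_card_le
    · intro x hx
      simp only [Finset.mem_image] at hx
      obtain ⟨y, hy, rfl⟩ := hx
      exact hcl p hp y hy
    · rw [Finset.card_image_of_injective _ (hinj _)]
  -- stabilizer subgroup
  set Stab : AddSubgroup (ZMod a) :=
    { carrier := {z | C.image (· + z) = C}
      zero_mem' := by
        simp only [Set.mem_setOf_eq, add_zero]
        exact Finset.image_id'
      add_mem' := by
        intro z w hz hw
        simp only [Set.mem_setOf_eq] at *
        have : C.image (· + (z + w)) = (C.image (· + z)).image (· + w) := by
          rw [Finset.image_image]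
          congr 1
          ext x
          simp [add_assoc]
        rw [this, hz, hw]
      neg_mem' := by
        intro z hz
        simp only [Set.mem_setOf_eq] at *
        conv_lhs => rw [← hz]
        rw [Finset.image_image]
        have : ((· + -z) ∘ (· + z)) = id := by ext x; simp
        rw [this, Finset.image_id] } with hStab
  have hmemStab : ∀ p ∈ P', (p : ZMod a) ∈ Stab := fun p hp => himg p hp
  -- pull back to ℤ
  obtain ⟨d, hd⟩ := Int.subgroup_cyclic (Stab.comap (Int.castAddHom (ZMod a)))
  have hdvd : ∀ p ∈ P', d ∣ (p : ℤ) := by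
    intro p hp
    have : (p : ℤ) ∈ Stab.comap (Int.castAddHom (ZMod a)) := by
      simp only [AddSubgroup.mem_comap, Int.coe_castAddHom]
      push_cast
      exact hmemStab p hp
    rw [hd] at this
    obtain ⟨n, hn⟩ := AddSubgroup.mem_closure_singleton.mp this
    exact ⟨n, by rw [← hn]; simp [zsmul_eq_mul, mul_comm]⟩
  have hd1 : d.natAbs = 1 := by
    have : d.natAbs ∣ P'.gcd id := by
      apply Finset.dvd_gcd
      intro p hp
      have := Int.natAbs_dvd_natAbs.mpr (hdvd p hp)
      simpa using this
    rw [hgcd] at this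
    exact Nat.dvd_one.mp this
  have h1Stab : (1 : ZMod a) ∈ Stab := by
    have : (1 : ℤ) ∈ Stab.comap (Int.castAddHom (ZMod a)) := by
      rw [hd]
      apply AddSubgroup.mem_closure_singleton.mpr
      rcases Int.natAbs_eq_iff.mp hd1 with h | h
      · exact ⟨1, by simp [h]⟩
      · exact ⟨-1, by simp [h]⟩
    simpa using this
  have hallStab : ∀ z : ZMod a, z ∈ Stab := by
    intro z
    have : z = (z.val : ℕ) • (1 : ZMod a) := by
      rw [nsmul_eq_mul, mul_one, ZMod.natCast_val, ZMod.cast_id]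
    rw [this]
    exact AddSubgroup.nsmul_mem Stab h1Stab _
  apply Finset.eq_univ_iff_forall.mpr
  intro y
  have hy : C.image (· + y) = C := hallStab y
  rw [← hy]
  exact Finset.mem_image.mpr ⟨0, h0, by simp⟩

/-- Schur's bound: everything ≥ (max−1)(min−1) is in the semigroup. -/
lemma frobenius_reach (P' : Finset ℕ) (hne' : P'.Nonempty)
    (h2 : ∀ p ∈ P', 2 ≤ p) (hgcd : P'.gcd id = 1) (n : ℕ)
    (hn : (P'.max' hne' - 1) * (P'.min' hne' - 1) ≤ n) :
    n ∈ AddSubmonoid.closure (P' : Set ℕ) := by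
  set a := P'.min' hne' with ha
  set m := P'.max' hne' with hm
  have haP : a ∈ P' := P'.min'_mem hne'
  have hmP : m ∈ P' := P'.max'_mem hne'
  have ha2 : 2 ≤ a := h2 a haP
  have ham : a ≤ m := P'.min'_le _ hmP
  have hmub : ∀ p ∈ P', p ≤ m := fun p hp => P'.le_max' p hp
  haveI : NeZero a := ⟨by omega⟩
  -- growth of reachSet
  have growth : ∀ k, k + 1 ≤ (reachSet P' a k).card ∨ reachSet P' a k = Finset.univ := by
    intro k
    induction k with
    | zero => left; simp [reachSet]
    | succ k ih =>
      rcases ih with ih | ih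
      · by_cases h : reachSet P' a (k+1) = reachSet P' a k
        · right
          have hcl : ∀ p ∈ P', ∀ x ∈ reachSet P' a k, x + (p : ZMod a) ∈ reachSet P' a k := by
            intro p hp x hx
            rw [← h]
            simp only [reachSet, Finset.mem_union, Finset.mem_biUnion, Finset.mem_image]
            exact Or.inr ⟨p, hp, x, hx, rfl⟩
          rw [h]
          exact closed_eq_univ hgcd _ (zero_mem_reachSet P' a k) hcl
        · left
          have hss : reachSet P' a k ⊂ reachSet P' a (k+1) :=
            Finset.ssubset_iff_subset_ne.mpr ⟨reachSet_mono P' a k, Ne.symm h⟩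
          have := Finset.card_lt_card hss
          omega
      · right
        apply Finset.eq_univ_iff_forall.mpr
        intro x
        exact reachSet_mono P' a k (ih ▸ Finset.mem_univ x)
  have hfull : reachSet P' a (a - 1) = Finset.univ := by
    rcases growth (a - 1) with h | h
    · apply Finset.eq_univ_of_card
      have hcardle : (reachSet P' a (a-1)).card ≤ Fintype.card (ZMod a) := Finset.card_le_univ _
      rw [ZMod.card a] at hcardle ⊢
      omega
    · exact h
  -- get a small representative congruent to n
  have hr : ((n : ℕ) : ZMod a) ∈ reachSet P' a (a - 1) := hfull ▸ Finset.mem_univ _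
  obtain ⟨t, htmem, htle, htcast⟩ := reachSet_bound hmub (a - 1) _ hr
  -- t ≡ n mod a
  have hmod : t ≡ n [MOD a] := (ZMod.natCast_eq_natCast_iff t n a).mp htcast
  have htn : t ≤ n := by
    by_contra hlt
    push_neg at hlt
    have hmod' : n ≡ t [MOD a] := hmod.symm
    have hdvd : a ∣ t - n := (Nat.modEq_iff_dvd' (le_of_lt hlt)).mp hmod'
    have hale : a ≤ t - n := Nat.le_of_dvd (by omega) hdvd
    obtain ⟨A, hA⟩ : ∃ A, a = A + 1 := ⟨a - 1, by omega⟩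
    obtain ⟨M, hM⟩ : ∃ M, m = M + 1 := ⟨m - 1, by omega⟩
    have h1 : t ≤ A * (M + 1) := by rw [hA, hM] at htle; simpa using htle
    have h2' : M * A ≤ n := by rw [hA, hM] at hn; simpa using hn
    have h3 : n + A + 1 ≤ t := by omega
    nlinarith
  -- conclude
  have hdvd : a ∣ n - t := (Nat.modEq_iff_dvd' htn).mp hmod
  obtain ⟨c, hc⟩ := hdvd
  have hrep : n = t + c * a := by rw [mul_comm]; omega
  rw [hrep]
  apply add_mem htmem
  have haC : a ∈ AddSubmonoid.closure (P' : Set ℕ) :=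
    AddSubmonoid.subset_closure (by simpa using haP)
  have := AddSubmonoid.nsmul_mem _ haC c
  simpa [smul_eq_mul] using this

/-- Containment only needs to be checked below the Frobenius bound
F = (max P' − 1)(min P' − 1). -/
theorem containment_check_below_frobenius
    (P' : Finset ℕ) (hne' : P'.Nonempty)
    (h2 : ∀ p ∈ P', 2 ≤ p) (hgcd : P'.gcd id = 1)
    (P : Finset ℕ) (hne : P.Nonempty) (hPpos : ∀ p ∈ P, 0 < p)
    (c₀ : ℕ) :
    ({x : ℕ | ∃ y ∈ AddSubmonoid.closure (P : Set ℕ), x = c₀ + y} ⊆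
        (AddSubmonoid.closure (P' : Set ℕ) : Set ℕ)) ↔
      ∀ x ∈ {x : ℕ | ∃ y ∈ AddSubmonoid.closure (P : Set ℕ), x = c₀ + y},
        x < (P'.max' hne' - 1) * (P'.min' hne' - 1) →
          x ∈ AddSubmonoid.closure (P' : Set ℕ) := by
  constructor
  · intro h x hx _
    exact h hx
  · intro h x hx
    by_cases hlt : x < (P'.max' hne' - 1) * (P'.min' hne' - 1)
    · exact h x hx hlt
    · exact frobenius_reach P' hne' h2 hgcd x (le_of_not_gt hlt)
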